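/- arXiv:1706.05703 — 2 statements merged into one kernel-verified Lean document; each statement's English description precedes it below -/
import Mathlib

section
/- Let a be a nonzero real number, σ a real number, and T a real number. Define B(t,T) = (1/a)·(exp(a·(T−t)) − 1), A(t,T) = (σ²/(4a²))·(a·B(t,T)² − 2·B(t,T) + 2·(T−t)), and F(t,r) = exp(A(t,T) − B(t,T)·r) for t ∈ ℝ and r ∈ ℝ. Then F(T,r) = 1 for all r, and F satisfies the term structure partial differential equation ∂_t F(t,r) + a·r·∂_r F(t,r) + (σ²/2)·∂²_{rr} F(t,r) − r·F(t,r) = 0 for all t and r. -/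
/-!
For `F(t,r) = exp(A(t) − B(t)·r)` one has `∂ᵣF = −B·F`, `∂ᵣᵣF = B²·F` and `∂ₜF = (A' − B'·r)·F`,
so the PDE reduces to the coefficient equations `B' = −(a·B + 1)` and `A' = −(σ²/2)·B²`
(the Riccati system of the affine model), which the explicit `A`, `B` solve; both vanish at `t = T`.
-/

open Real

noncomputable section

theorem deriv_exp_sub_mul (α β : ℝ) :
    deriv (fun r => exp (α - β * r)) = fun r => -β * exp (α - β * r) := by
  funext r
  have h : HasDerivAt (fun r => α - β * r) (-β) r := by
    simpa using ((hasDerivAt_id r).const_mul β).const_sub α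
  rw [h.exp.deriv, mul_comm]

theorem deriv_deriv_exp_sub_mul (α β r : ℝ) :
    deriv (deriv fun r => exp (α - β * r)) r = β ^ 2 * exp (α - β * r) := by
  rw [deriv_exp_sub_mul, deriv_const_mul _ (by fun_prop), deriv_exp_sub_mul]
  ring

theorem termStructurePDE_of_riccati {a σ t : ℝ} {A B : ℝ → ℝ}
    (hA : HasDerivAt A (-(σ ^ 2 / 2) * B t ^ 2) t) (hB : HasDerivAt B (-(a * B t + 1)) t)
    (r : ℝ) :
    deriv (fun t' => exp (A t' - B t' * r)) t + a * r * deriv (fun r' => exp (A t - B t * r')) r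
      + (σ ^ 2 / 2) * deriv (deriv fun r' => exp (A t - B t * r')) r
      - r * exp (A t - B t * r) = 0 := by
  have hF : HasDerivAt (fun t' => exp (A t' - B t' * r))
      (exp (A t - B t * r) * (-(σ ^ 2 / 2) * B t ^ 2 - -(a * B t + 1) * r)) t :=
    (hA.sub (hB.mul_const r)).exp
  rw [hF.deriv, deriv_deriv_exp_sub_mul, deriv_exp_sub_mul]
  ring

def termStructureB (a T t : ℝ) : ℝ := (1 / a) * (exp (a * (T - t)) - 1)

def termStructureA (a σ T t : ℝ) : ℝ :=
  (σ ^ 2 / (4 * a ^ 2)) * (a * termStructureB a T t ^ 2 - 2 * termStructureB a T t + 2 * (T - t))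

theorem termStructureB_self (a T : ℝ) : termStructureB a T T = 0 := by
  simp [termStructureB]

theorem termStructureA_self (a σ T : ℝ) : termStructureA a σ T T = 0 := by
  simp [termStructureA, termStructureB_self]

theorem hasDerivAt_termStructureB {a : ℝ} (ha : a ≠ 0) (T t : ℝ) :
    HasDerivAt (termStructureB a T) (-(a * termStructureB a T t + 1)) t := by
  have h : HasDerivAt (fun t => a * (T - t)) (-a) t := by
    simpa using ((hasDerivAt_id t).const_sub T).const_mul a
  refine ((h.exp.sub_const 1).const_mul (1 / a)).congr_deriv ?_
  simp only [termStructureB]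
  field_simp
  ring

theorem hasDerivAt_termStructureA {a : ℝ} (ha : a ≠ 0) (σ T t : ℝ) :
    HasDerivAt (termStructureA a σ T) (-(σ ^ 2 / 2) * termStructureB a T t ^ 2) t := by
  have hB := hasDerivAt_termStructureB ha T t
  have hT : HasDerivAt (fun t => 2 * (T - t)) (-2) t := by
    simpa using ((hasDerivAt_id t).const_sub T).const_mul 2
  refine ((((hB.pow 2).const_mul a).sub (hB.const_mul 2)).add hT).const_mul (σ ^ 2 / (4 * a ^ 2))
    |>.congr_deriv ?_
  field_simp
  ring

end

/-- The affine term structure candidate `F(t,r) = exp(A(t,T) − B(t,T)·r)`, with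
`B(t,T) = (1/a)·(e^{a(T−t)} − 1)` and
`A(t,T) = (σ²/(4a²))·(a·B(t,T)² − 2·B(t,T) + 2(T−t))`, satisfies the terminal
condition `F(T,r) = 1` and the no-arbitrage term structure PDE
`∂ₜF + a·r·∂ᵣF + (σ²/2)·∂ᵣᵣF − r·F = 0`. -/
theorem carma_affine_term_structure_pde (a σ T : ℝ) (ha : a ≠ 0)
    (B A : ℝ → ℝ) (F : ℝ → ℝ → ℝ)
    (hB : ∀ t, B t = (1 / a) * (Real.exp (a * (T - t)) - 1))
    (hA : ∀ t, A t = (σ ^ 2 / (4 * a ^ 2)) * (a * (B t) ^ 2 - 2 * B t + 2 * (T - t)))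
    (hF : ∀ t r, F t r = Real.exp (A t - B t * r)) :
    (∀ r : ℝ, F T r = 1) ∧
    ∀ t r : ℝ,
      deriv (fun t' => F t' r) t + a * r * deriv (fun r' => F t r') r
        + (σ ^ 2 / 2) * deriv (deriv (fun r' => F t r')) r - r * F t r = 0 := by
  obtain rfl : B = termStructureB a T := funext hB
  obtain rfl : A = termStructureA a σ T := funext hA
  obtain rfl : F = fun t r => exp (termStructureA a σ T t - termStructureB a T t * r) :=
    funext₂ hF
  refine ⟨fun r => by simp [termStructureA_self, termStructureB_self], fun t r => ?_⟩
  exact termStructurePDE_of_riccati (hasDerivAt_termStructureA ha σ T t)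
    (hasDerivAt_termStructureB ha T t) r
end

section
/- Let p ≥ 1, let a₁, …, a_p be complex numbers, and let A be the p×p companion-form matrix whose i-th row (1 ≤ i ≤ p−1) is the (i+1)-st standard basis row vector and whose last row is (−a_p, …, −a₁). Let a(z) = z^p + a₁ z^{p−1} + ⋯ + a_p, let λ₁, …, λ_p be the roots of a(z), assumed pairwise distinct, and let b(z) = b₀ + b₁ z + ⋯ + b_{p−1} z^{p−1} with complex coefficients. Let e = (0, …, 0, 1)ᵀ and b = (b₀, b₁, …, b_{p−1})ᵀ. Then for every u ∈ ℝ, bᵀ·exp(A·u)·e = Σ_{i=1}^{p} (b(λ_i)/a′(λ_i))·exp(λ_i·u), where a′ is the derivative of a and exp(A·u) is the matrix exponential. -/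
open Polynomial Matrix NormedSpace

/-!
Each root `λ` of `a` makes the Vandermonde row `V = (1, λ, …, λ^{p-1})` an eigenvector of the
companion matrix `A` with eigenvalue `λ`, hence of `exp (u • A)` with eigenvalue `e^{λu}`.
Expanding `X ^ j` (`j < p`) by Lagrange interpolation at the distinct roots and comparing
coefficients of `X ^ (p - 1)` writes `e` as `∑ᵢ Vᵢ / ∏_{k ≠ i} (λᵢ - λₖ)`, with `Vᵢ` the row
of `λᵢ`, and `∏_{k ≠ i} (λᵢ - λₖ) = a′(λᵢ)`. Pairing with `b` turns `Vᵢ` into `b(λᵢ)`.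
-/

open scoped Norms.Operator in
theorem Matrix.exp_mulVec_of_mulVec_eq_smul {m 𝕂 : Type*} [Fintype m] [DecidableEq m] [RCLike 𝕂]
    {M : Matrix m m 𝕂} {v : m → 𝕂} {μ : 𝕂} (h : M *ᵥ v = μ • v) :
    exp M *ᵥ v = exp μ • v := by
  have hpow (n : ℕ) : M ^ n *ᵥ v = μ ^ n • v := by
    induction n with
    | zero => simp
    | succ n ih => rw [pow_succ', ← mulVec_mulVec, ih, mulVec_smul, h, smul_smul, ← pow_succ]
  let evalAt : Matrix m m 𝕂 →L[𝕂] (m → 𝕂) :=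
    LinearMap.toContinuousLinearMap ((LinearMap.applyₗ v).comp Matrix.toLin'.toLinearMap)
  have hM := (exp_series_hasSum_exp' (𝕂 := 𝕂) M).mapL evalAt
  have hμ := (exp_series_hasSum_exp' (𝕂 := 𝕂) μ).smul_const v
  refine hM.unique ?_
  simpa [evalAt, ← Matrix.toLin'_pow, hpow, smul_smul] using hμ

/-- Both sides are the coefficient of `X ^ (card ι - 1)` in `X ^ j`, the right one read off the
Lagrange interpolation of `X ^ j` at the nodes `v i`. -/
theorem sum_pow_div_prod_sub_eq_ite {F ι : Type*} [Field F] [Fintype ι] [DecidableEq ι] {v : ι → F}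
    (hv : Function.Injective v) {j : ℕ} (hj : j < Fintype.card ι) :
    ∑ i, v i ^ j / ∏ k ∈ Finset.univ.erase i, (v i - v k) =
      if j = Fintype.card ι - 1 then 1 else 0 := by
  have := Lagrange.coeff_eq_sum (s := Finset.univ) hv.injOn (P := X ^ j)
    (by rw [degree_X_pow, Finset.card_univ]; exact_mod_cast hj)
  simp only [eval_pow, eval_X, Finset.card_univ, coeff_X_pow] at this
  rw [← this]
  simp [eq_comm]

theorem companion_mulVec_pow_eq_smul {R : Type*} [CommRing R] {p : ℕ} {a : Fin p → R}
    {A : Matrix (Fin p) (Fin p) R}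
    (hA : ∀ i j : Fin p,
      A i j = if (i : ℕ) = p - 1 then -a j.rev else if (j : ℕ) = (i : ℕ) + 1 then 1 else 0)
    {x : R} (hx : x ^ p + ∑ k : Fin p, a k * x ^ (p - 1 - (k : ℕ)) = 0) :
    A *ᵥ (fun j : Fin p => x ^ (j : ℕ)) = x • fun j : Fin p => x ^ (j : ℕ) := by
  ext r
  simp only [mulVec, dotProduct, hA, Pi.smul_apply, smul_eq_mul, ← pow_succ']
  by_cases hr : (r : ℕ) = p - 1
  · simp only [hr, if_true]
    calc ∑ j : Fin p, -a j.rev * x ^ (j : ℕ)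
        = -∑ k : Fin p, a k * x ^ (p - 1 - (k : ℕ)) := by
          rw [← Equiv.sum_comp Fin.revPerm, ← Finset.sum_neg_distrib]
          refine Finset.sum_congr rfl fun k _ => ?_
          simp only [Fin.revPerm_apply, Fin.rev_rev, Fin.val_rev, neg_mul]
          congr 3
          omega
      _ = x ^ (p - 1 + 1) := by rw [Nat.sub_add_cancel (by omega)]; linear_combination -hx
  · have hr1 : (r : ℕ) + 1 < p := by omega
    simp only [hr, if_false, ite_mul, one_mul, zero_mul]
    rw [Finset.sum_eq_single ⟨(r : ℕ) + 1, hr1⟩] <;> simp +contextual [Fin.ext_iff]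

/-- Partial-fraction expansion of the CARMA kernel: if the companion-form state
matrix `A` has autoregressive polynomial `a(z) = z^p + a₁ z^{p−1} + ⋯ + a_p`
whose roots `λ₁, …, λ_p` are pairwise distinct, then for every `u ∈ ℝ`,
`bᵀ·exp(A·u)·e = Σᵢ (b(λᵢ)/a′(λᵢ))·e^{λᵢ u}`, where
`b(z) = b₀ + b₁ z + ⋯ + b_{p−1} z^{p−1}` and `e = (0, …, 0, 1)ᵀ`.
Here `a i` denotes `a_{i+1}` and `b i` denotes `b_i`. -/
theorem carma_kernel_partial_fraction (p : ℕ)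
    (a b : Fin p → ℂ) (lam : Fin p → ℂ)
    (A : Matrix (Fin p) (Fin p) ℂ)
    (hA : ∀ i j : Fin p,
      A i j = if (i : ℕ) = p - 1 then -a ⟨p - 1 - (j : ℕ), by have := j.isLt; omega⟩
              else if (j : ℕ) = (i : ℕ) + 1 then 1 else 0)
    (apoly : ℂ[X]) (hapoly : apoly = X ^ p + ∑ k : Fin p, C (a k) * X ^ (p - 1 - (k : ℕ)))
    (bpoly : ℂ[X]) (hbpoly : bpoly = ∑ k : Fin p, C (b k) * X ^ (k : ℕ))
    (hroots : apoly = ∏ i : Fin p, (X - C (lam i)))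
    (hdist : Function.Injective lam)
    (e : Fin p → ℂ) (he : ∀ j : Fin p, e j = if (j : ℕ) = p - 1 then 1 else 0) :
    ∀ u : ℝ,
      b ⬝ᵥ (exp ((u : ℂ) • A)).mulVec e =
        ∑ i : Fin p,
          (bpoly.eval (lam i) / (derivative apoly).eval (lam i)) *
            Complex.exp (lam i * u) := by
  intro u
  have hA_rev (i j : Fin p) :
      A i j = if (i : ℕ) = p - 1 then -a j.rev else if (j : ℕ) = (i : ℕ) + 1 then 1 else 0 := by
    rw [hA]; congr 3; ext; simp only [Fin.val_rev]; omega
  set V : Fin p → Fin p → ℂ := fun i j => lam i ^ (j : ℕ)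
  have hapoly_nodal : apoly = Lagrange.nodal Finset.univ lam := hroots
  have heig (i : Fin p) : ((u : ℂ) • A) *ᵥ V i = (u * lam i) • V i := by
    have hroot : apoly.eval (lam i) = 0 := by
      rw [hapoly_nodal]; exact Lagrange.eval_nodal_at_node (Finset.mem_univ i)
    rw [hapoly] at hroot
    simp only [eval_add, eval_pow, eval_X, eval_finsetSum, eval_mul, eval_C] at hroot
    rw [smul_mulVec, companion_mulVec_pow_eq_smul hA_rev hroot, smul_smul]
  have he_sum : e = ∑ i, (∏ k ∈ Finset.univ.erase i, (lam i - lam k))⁻¹ • V i := by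
    ext j
    have := sum_pow_div_prod_sub_eq_ite hdist (j := j) (by simp)
    simp only [Fintype.card_fin] at this
    simp [he, V, ← this, div_eq_inv_mul]
  have hb (i : Fin p) : b ⬝ᵥ V i = bpoly.eval (lam i) := by
    simp [hbpoly, eval_finsetSum, dotProduct, V]
  have hderiv (i : Fin p) :
      (derivative apoly).eval (lam i) = ∏ k ∈ Finset.univ.erase i, (lam i - lam k) := by
    rw [hapoly_nodal, Lagrange.eval_nodal_derivative_eval_node_eq (Finset.mem_univ i),
      Lagrange.eval_nodal]
  rw [he_sum, mulVec_sum, dotProduct_sum]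
  refine Finset.sum_congr rfl fun i _ => ?_
  rw [mulVec_smul, exp_mulVec_of_mulVec_eq_smul (heig i), dotProduct_smul, dotProduct_smul, hb,
    hderiv, ← Complex.exp_eq_exp_ℂ, smul_eq_mul, smul_eq_mul, mul_comm (u : ℂ)]
  ring
end
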